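/- arXiv:1805.06294 — 2 statements merged into one kernel-verified Lean document; each statement's English description precedes it below -/
import Mathlib

section
/- Let Ω ⊆ ℝ^d be open and connected, and let f : Ω → ℝ be continuous. Suppose that for all x ∈ Ω and all h ∈ ℝ^d with |h| < dist(x, ∂Ω) one has f(x) = (f(x+h) + f(x-h))/2. Then f is affine on Ω, i.e., there exist a ∈ ℝ and b ∈ ℝ^d such that f(x) = a + b · x for all x ∈ Ω. -/
open MeasureTheory Metric Filter
open scoped FourierTransform ENNReal NNReal Topology RealInnerProductSpace Convolution

noncomputable section

/-- `ℝ^d` as a Euclidean space. -/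
abbrev Euc (d : ℕ) := EuclideanSpace ℝ (Fin d)

/-- The radius of the centered open ball with the same volume as `A`. -/
def symmRadius {d : ℕ} (A : Set (Euc d)) : ℝ :=
  sInf {r : ℝ | 0 ≤ r ∧ volume A ≤ volume (ball (0 : Euc d) r)}

/-- The symmetric rearrangement `A*` of a set `A ⊆ ℝ^d`: the centered open ball
with the same Lebesgue measure. -/
def setRearr {d : ℕ} (A : Set (Euc d)) : Set (Euc d) := ball 0 (symmRadius A)

/-- The symmetric-decreasing rearrangement `g*` of a function, via the layer-cake formula
`g*(x) = ∫₀^∞ 1_{{|g|>t}*}(x) dt`. -/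
def symmDecr {d : ℕ} {F : Type*} [NormedAddCommGroup F] (g : Euc d → F) (x : Euc d) : ℝ :=
  ∫ t in Set.Ioi (0:ℝ), (setRearr {y | t < ‖g y‖}).indicator (fun _ => (1:ℝ)) x

/-- `u` is the (tempered-distributional) Fourier transform of `f`, characterized by
Parseval's relation against Schwartz functions. -/
def HasFT {d : ℕ} (f u : Euc d → ℂ) : Prop :=
  ∀ φ : SchwartzMap (Euc d) ℂ, ∫ x, f x * 𝓕 (⇑φ) x = ∫ ξ, u ξ * φ ξ

/-!
Near `c ∈ Ω`, applying the midpoint identity at `c + (y + z) / 2` with the two steps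
`(y ∓ z) / 2` shows that `g y = f (c + y) - f c` solves Cauchy's equation
`g (y + z) = g y + g z` on a small ball. Since `2ⁿ g (2⁻ⁿ v)` is eventually constant in `n`, its
limit extends `g` to an additive map on the whole space, which is continuous because `g` is
continuous at `0`, hence linear. So `f` is affine near each point of `Ω`; in particular it is
analytic on `Ω`, and the identity theorem on the connected set `Ω` spreads one local affine
expression over all of `Ω`.
-/

section DyadicExtension

variable {E F : Type*} [NormedAddCommGroup E] [NormedSpace ℝ E]
  [NormedAddCommGroup F] [NormedSpace ℝ F] {g : E → F} {ρ : ℝ}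

def dyadicRescale (g : E → F) (v : E) (n : ℕ) : F :=
  (2 ^ n : ℝ) • g ((2 ^ n : ℝ)⁻¹ • v)

def dyadicExtension (g : E → F) (v : E) : F :=
  limUnder atTop (dyadicRescale g v)

lemma norm_inv_two_pow_smul_lt {v : E} {n : ℕ} (hv : ‖v‖ < 2 ^ n * ρ) :
    ‖(2 ^ n : ℝ)⁻¹ • v‖ < ρ := by
  rw [norm_smul, norm_inv, norm_pow, Real.norm_two, inv_mul_lt_iff₀ (by positivity)]
  exact hv

lemma eventually_lt_two_pow_mul (hρ : 0 < ρ) (r : ℝ) :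
    ∀ᶠ n : ℕ in atTop, r < 2 ^ n * ρ :=
  ((tendsto_pow_atTop_atTop_of_one_lt one_lt_two).atTop_mul_const hρ).eventually_gt_atTop _

variable (hadd : ∀ y ∈ ball (0 : E) ρ, ∀ z ∈ ball (0 : E) ρ, g (y + z) = g y + g z)
include hadd

lemma dyadicRescale_succ {v : E} {n : ℕ} (hv : ‖v‖ < 2 ^ (n + 1) * ρ) :
    dyadicRescale g v (n + 1) = dyadicRescale g v n := by
  set y : E := (2 ^ (n + 1) : ℝ)⁻¹ • v
  have hy : y ∈ ball (0 : E) ρ := mem_ball_zero_iff.2 (norm_inv_two_pow_smul_lt hv)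
  have hyy : (2 ^ n : ℝ)⁻¹ • v = y + y := by
    simp only [y, ← two_smul ℝ, smul_smul, pow_succ]; congr 1; field_simp
  rw [dyadicRescale, dyadicRescale, hyy, hadd y hy y hy, ← two_smul ℝ (g y), smul_smul, ← pow_succ]

lemma eventuallyConst_dyadicRescale (hρ : 0 < ρ) (v : E) :
    EventuallyConst (dyadicRescale g v) atTop := by
  obtain ⟨N, hN⟩ := eventually_atTop.1 (eventually_lt_two_pow_mul hρ ‖v‖)
  exact eventuallyConst_atTop_nat.2 ⟨N, fun m hm => dyadicRescale_succ hadd (hN _ (by omega))⟩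

lemma tendsto_dyadicExtension (hρ : 0 < ρ) (v : E) :
    Tendsto (dyadicRescale g v) atTop (𝓝 (dyadicExtension g v)) := by
  obtain ⟨w, hw⟩ := (eventuallyConst_dyadicRescale hadd hρ v).exists_tendsto
  exact tendsto_nhds_limUnder ⟨w, hw.mono_right (pure_le_nhds w)⟩

lemma dyadicExtension_add (hρ : 0 < ρ) (v w : E) :
    dyadicExtension g (v + w) = dyadicExtension g v + dyadicExtension g w := by
  refine tendsto_nhds_unique (tendsto_dyadicExtension hadd hρ (v + w))
    (((tendsto_dyadicExtension hadd hρ v).add (tendsto_dyadicExtension hadd hρ w)).congr' ?_)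
  filter_upwards [eventually_lt_two_pow_mul hρ ‖v‖, eventually_lt_two_pow_mul hρ ‖w‖]
    with n hv hw
  rw [dyadicRescale, dyadicRescale, dyadicRescale, smul_add,
    hadd _ (mem_ball_zero_iff.2 (norm_inv_two_pow_smul_lt hv))
      _ (mem_ball_zero_iff.2 (norm_inv_two_pow_smul_lt hw)), smul_add]

lemma dyadicExtension_eq_of_mem_ball (hρ : 0 < ρ) {v : E} (hv : v ∈ ball (0 : E) ρ) :
    dyadicExtension g v = g v := by
  have hconst : ∀ n, dyadicRescale g v n = g v := by
    intro n
    induction n with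
    | zero => simp [dyadicRescale]
    | succ n ih =>
      rw [dyadicRescale_succ hadd, ih]
      calc ‖v‖ < ρ := mem_ball_zero_iff.1 hv
        _ ≤ 2 ^ (n + 1) * ρ := le_mul_of_one_le_left hρ.le (one_le_pow₀ one_le_two)
  exact tendsto_nhds_unique (tendsto_dyadicExtension hadd hρ v)
    (tendsto_const_nhds.congr fun n => (hconst n).symm)

theorem exists_continuousLinearMap_eqOn_ball (hρ : 0 < ρ) (hg : ContinuousAt g 0) :
    ∃ L : E →L[ℝ] F, Set.EqOn g L (ball 0 ρ) := by
  let G : E →+ F := AddMonoidHom.mk' (dyadicExtension g) (dyadicExtension_add hadd hρ)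
  have hGg : G =ᶠ[𝓝 0] g := eventually_of_mem (ball_mem_nhds 0 hρ) fun v hv =>
    dyadicExtension_eq_of_mem_ball hadd hρ hv
  refine ⟨G.toRealLinearMap (continuous_of_continuousAt_zero G (hg.congr hGg.symm)),
    fun v hv => (dyadicExtension_eq_of_mem_ball hadd hρ hv).symm⟩

end DyadicExtension

section Midpoint

variable {E : Type*} [NormedAddCommGroup E] [NormedSpace ℝ E] {f : E → ℝ}

lemma sub_add_sub_eq_of_midpoint {c : E} {ρ : ℝ}
    (hmid : ∀ x ∈ ball c ρ, ∀ h : E, ‖h‖ < ρ → f x = (f (x + h) + f (x - h)) / 2)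
    {y z : E} (hy : y ∈ ball (0 : E) ρ) (hz : z ∈ ball (0 : E) ρ) :
    f (c + (y + z)) - f c = (f (c + y) - f c) + (f (c + z) - f c) := by
  rw [mem_ball_zero_iff] at hy hz
  have half_lt : ∀ w : E, ‖w‖ ≤ ‖y‖ + ‖z‖ → ‖(2⁻¹ : ℝ) • w‖ < ρ := fun w hw => by
    rw [norm_smul, Real.norm_of_nonneg (by norm_num)]; linarith
  have hx : c + (2⁻¹ : ℝ) • (y + z) ∈ ball c ρ := by
    rw [mem_ball_iff_norm, add_sub_cancel_left]; exact half_lt _ (norm_add_le y z)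
  have h₁ := hmid _ hx _ (half_lt _ (norm_sub_le y z))
  have h₂ := hmid _ hx _ (half_lt _ (norm_add_le y z))
  rw [show c + (2⁻¹ : ℝ) • (y + z) + (2⁻¹ : ℝ) • (y - z) = c + y by module,
    show c + (2⁻¹ : ℝ) • (y + z) - (2⁻¹ : ℝ) • (y - z) = c + z by module] at h₁
  rw [show c + (2⁻¹ : ℝ) • (y + z) + (2⁻¹ : ℝ) • (y + z) = c + (y + z) by module,
    show c + (2⁻¹ : ℝ) • (y + z) - (2⁻¹ : ℝ) • (y + z) = c by module] at h₂
  linarith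

variable {Ω : Set E} (hΩo : IsOpen Ω) (hf : ContinuousOn f Ω)
  (hmid : ∀ x ∈ Ω, ∀ h : E, ball x ‖h‖ ⊆ Ω → f x = (f (x + h) + f (x - h)) / 2)
include hΩo hf hmid

lemma exists_affine_eventuallyEq_of_midpoint {c : E} (hc : c ∈ Ω) :
    ∃ (a : ℝ) (L : E →L[ℝ] ℝ), f =ᶠ[𝓝 c] fun x => a + L x := by
  obtain ⟨r, hr, hrΩ⟩ := Metric.isOpen_iff.1 hΩo c hc
  have hmid' : ∀ x ∈ ball c (r / 2), ∀ h : E, ‖h‖ < r / 2 →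
      f x = (f (x + h) + f (x - h)) / 2 := fun x hx h hh =>
    hmid x (hrΩ (ball_subset_ball (half_le_self hr.le) hx)) h
      ((ball_subset_ball' (by rw [mem_ball] at hx; linarith)).trans hrΩ)
  have hcont : ContinuousAt (fun y => f (c + y) - f c) 0 :=
    ((hf.continuousAt (hΩo.mem_nhds hc)).comp_of_eq
      (continuous_const.add continuous_id).continuousAt (add_zero c)).sub continuousAt_const
  obtain ⟨L, hL⟩ := exists_continuousLinearMap_eqOn_ball
    (fun y hy z hz => sub_add_sub_eq_of_midpoint hmid' hy hz) (half_pos hr) hcont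
  refine ⟨f c - L c, L, eventually_of_mem (ball_mem_nhds c (half_pos hr)) fun x hx => ?_⟩
  have hLx := hL (mem_ball_zero_iff.2 (mem_ball_iff_norm.1 hx))
  simp only [add_sub_cancel, map_sub] at hLx
  linarith

lemma analyticOnNhd_of_midpoint : AnalyticOnNhd ℝ f Ω := fun c hc => by
  obtain ⟨a, L, hL⟩ := exists_affine_eventuallyEq_of_midpoint hΩo hf hmid hc
  exact (analyticAt_const.add (L.analyticAt c)).congr hL.symm

theorem exists_affine_eqOn_of_midpoint (hΩc : IsConnected Ω) :
    ∃ (a : ℝ) (L : E →L[ℝ] ℝ), Set.EqOn f (fun x => a + L x) Ω := by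
  obtain ⟨c, hc⟩ := hΩc.nonempty
  obtain ⟨a, L, hL⟩ := exists_affine_eventuallyEq_of_midpoint hΩo hf hmid hc
  exact ⟨a, L, (analyticOnNhd_of_midpoint hΩo hf hmid).eqOn_of_preconnected_of_eventuallyEq
    (fun x _ => analyticAt_const.add (L.analyticAt x)) hΩc.isPreconnected hc hL⟩

end Midpoint

/-- midpoint property on an open connected set implies affine. -/
theorem stmt_0 {d : ℕ} (Ω : Set (Euc d)) (hΩo : IsOpen Ω) (hΩc : IsConnected Ω)
    (f : Euc d → ℝ) (hf : ContinuousOn f Ω)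
    (hmid : ∀ x ∈ Ω, ∀ h : Euc d, ball x ‖h‖ ⊆ Ω → f x = (f (x + h) + f (x - h)) / 2) :
    ∃ (a : ℝ) (b : Euc d), ∀ x ∈ Ω, f x = a + ⟪b, x⟫ := by
  obtain ⟨a, L, hL⟩ := exists_affine_eqOn_of_midpoint hΩo hf hmid hΩc
  refine ⟨a, (InnerProductSpace.toDual ℝ (Euc d)).symm L, fun x hx => ?_⟩
  rw [InnerProductSpace.toDual_symm_apply]
  exact hL hx
end
end

section
/- Let ω : [0,∞) → ℝ be nonnegative and strictly increasing, let A ⊆ ℝ^d be measurable with finite measure and A* = B_R(0) the centered ball with |A*| = |A|. If ∫_{A*} ω(|ξ|) dξ = ∫_A ω(|ξ|) dξ < ∞, then μ(A \ A*) = 0, i.e., A coincides with A* up to a null set. -/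
open MeasureTheory Metric Filter
open scoped FourierTransform ENNReal NNReal Topology RealInnerProductSpace Convolution

noncomputable section

/-!
This is the bathtub principle. The sets `A \ B` and `B \ A`, with `B` the ball, have the same
measure `m`. On `A \ B` the weight is at least `ω R`, and on `B \ A` it is strictly below `ω R`.
Equality of the integrals over `A` and over `B` then gives
`ω R * m ≤ ∫_{A \ B} ω ≤ ∫_{B \ A} ω`, which is impossible when `m > 0` because the last
integral is then strictly less than `ω R * m`.
-/

open Set

namespace MeasureTheory

variable {α : Type*} [MeasurableSpace α] {μ : Measure α} {f : α → ℝ≥0∞} {c : ℝ≥0∞}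

theorem measure_eq_zero_of_const_mul_le_setLIntegral {s : Set α} (hs : MeasurableSet s)
    (hsfin : μ s ≠ ∞) (hc : c ≠ ∞) (hlt : ∀ x ∈ s, f x < c)
    (hle : c * μ s ≤ ∫⁻ x in s, f x ∂μ) : μ s = 0 := by
  by_contra hs0
  have hfin : ∫⁻ x in s, f x ∂μ ≠ ∞ :=
    ne_top_of_le_ne_top (ENNReal.mul_ne_top hc hsfin)
      ((setLIntegral_mono' hs fun x hx => (hlt x hx).le).trans_eq (setLIntegral_const s c))
  have hstrict := setLIntegral_strict_mono hs hs0 measurable_const hfin (ae_of_all _ hlt)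
  rw [setLIntegral_const] at hstrict
  exact hstrict.not_ge hle

theorem measure_sdiff_eq_zero_of_setLIntegral_le {A B : Set α} (hA : MeasurableSet A)
    (hB : MeasurableSet B) (hBfin : μ B ≠ ∞) (hvol : μ B = μ A) (hc : c ≠ ∞)
    (hin : ∀ x ∈ B, f x < c) (hout : ∀ x ∉ B, c ≤ f x)
    (hint : ∫⁻ x in A, f x ∂μ ≤ ∫⁻ x in B, f x ∂μ) : μ (A \ B) = 0 := by
  have hsymm : μ (A \ B) = μ (B \ A) :=
    measure_sdiff_symm hA.nullMeasurableSet hB.nullMeasurableSet hvol.symm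
      (ne_top_of_le_ne_top hBfin (measure_mono inter_subset_right))
  have hBint : ∫⁻ x in B, f x ∂μ ≠ ∞ :=
    ne_top_of_le_ne_top (ENNReal.mul_ne_top hc hBfin)
      ((setLIntegral_mono' hB fun x hx => (hin x hx).le).trans_eq (setLIntegral_const B c))
  have hsdiff : ∫⁻ x in A \ B, f x ∂μ ≤ ∫⁻ x in B \ A, f x ∂μ := by
    have hABint : ∫⁻ x in A ∩ B, f x ∂μ ≠ ∞ :=
      ne_top_of_le_ne_top hBint (lintegral_mono_set inter_subset_right)
    rwa [← ENNReal.add_le_add_iff_left hABint, lintegral_inter_add_sdiff f A hB, inter_comm,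
      lintegral_inter_add_sdiff f B hA]
  rw [hsymm]
  refine measure_eq_zero_of_const_mul_le_setLIntegral (hB.diff hA)
    (ne_top_of_le_ne_top hBfin (measure_mono sdiff_subset)) hc (fun x hx => hin x hx.1) ?_
  calc c * μ (B \ A) = ∫⁻ _ in A \ B, c ∂μ := by rw [setLIntegral_const, hsymm]
    _ ≤ ∫⁻ x in A \ B, f x ∂μ := setLIntegral_mono' (hA.diff hB) fun x hx => hout x hx.2
    _ ≤ ∫⁻ x in B \ A, f x ∂μ := hsdiff

end MeasureTheory

theorem stmt_3_general {d : ℕ} (ω : ℝ → ℝ) (hω0 : ∀ r, 0 ≤ r → 0 ≤ ω r)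
    (hmono : StrictMonoOn ω (Set.Ici 0))
    (A : Set (Euc d)) (hA : MeasurableSet A)
    (R : ℝ) (hR : 0 ≤ R) (hvol : volume (ball (0 : Euc d) R) = volume A)
    (heq : (∫⁻ ξ in ball (0 : Euc d) R, ENNReal.ofReal (ω ‖ξ‖)) =
      ∫⁻ ξ in A, ENNReal.ofReal (ω ‖ξ‖)) :
    volume (A \ ball (0 : Euc d) R) = 0 := by
  refine measure_sdiff_eq_zero_of_setLIntegral_le (c := ENNReal.ofReal (ω R)) hA
    measurableSet_ball measure_ball_lt_top.ne hvol ENNReal.ofReal_ne_top ?_ ?_ heq.ge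
  · intro ξ hξ
    rw [mem_ball_zero_iff] at hξ
    exact (ENNReal.ofReal_lt_ofReal_iff_of_nonneg (hω0 _ (norm_nonneg ξ))).2
      (hmono (norm_nonneg ξ) hR hξ)
  · intro ξ hξ
    rw [mem_ball_zero_iff, not_lt] at hξ
    exact ENNReal.ofReal_le_ofReal (hmono.monotoneOn hR (hR.trans hξ) hξ)

/-- for a strictly increasing nonnegative radial profile, equality
`∫_{A*} ω(|ξ|) = ∫_A ω(|ξ|) < ∞` forces `μ(A \ A*) = 0`. -/
theorem stmt_3 {d : ℕ} (ω : ℝ → ℝ) (hω0 : ∀ r, 0 ≤ r → 0 ≤ ω r)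
    (hmono : StrictMonoOn ω (Set.Ici 0))
    (A : Set (Euc d)) (hA : MeasurableSet A) (hAfin : volume A < ⊤)
    (R : ℝ) (hR : 0 ≤ R) (hvol : volume (ball (0 : Euc d) R) = volume A)
    (hfin : (∫⁻ ξ in A, ENNReal.ofReal (ω ‖ξ‖)) < ⊤)
    (heq : (∫⁻ ξ in ball (0 : Euc d) R, ENNReal.ofReal (ω ‖ξ‖)) =
      ∫⁻ ξ in A, ENNReal.ofReal (ω ‖ξ‖)) :
    volume (A \ ball (0 : Euc d) R) = 0 :=
  stmt_3_general ω hω0 hmono A hA R hR hvol heq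
end
end
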